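/- Let v_1 < v_2 < … < v_K be real numbers, B ∈ ℝ^K, and α > 0. Define D ∈ ℝ^K by the two-pass procedure: first set D ← B; then for k = 2,…,K set D_k ← min(D_{k−1} + α(v_k − v_{k−1}), D_k); then for k = K−1,…,1 set D_k ← min(D_{k+1} + α(v_{k+1} − v_k), D_k). The resulting D satisfies D_k = min_{1 ≤ l ≤ K} (B_l + α|v_k − v_l|) for every k. -/

import Mathlib

open Finset

/-!
Write `F k = min_l (B_l + α |v_k - v_l|)`. Both passes evaluate a recurrence
`E_k = min (E_{k∓1} + α |v_k - v_{k∓1}|, A_k)`. Such an `E` decreases by at most `α` per unit of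
`v` along the pass and never exceeds `A`, so the forward pass gives `D1_k ≤ B_l + α (v_k - v_l)`
for `l ≤ k` and the backward pass then `D_k ≤ D1_l + α (v_l - v_k)` for `k ≤ l`; together
`D ≤ F`. Conversely `F` is `α`-Lipschitz in `v` and lies below `B`, so induction along each pass
keeps `F` below `D1` and then below `D`.
-/

theorem inf'_add_mul_dist_le_add {ι X : Type*} [PseudoMetricSpace X] {s : Finset ι}
    (hs : s.Nonempty) (B : ι → ℝ) (p : ι → X) {α : ℝ} (hα : 0 ≤ α) (x y : X) :
    s.inf' hs (fun l => B l + α * dist x (p l)) ≤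
      s.inf' hs (fun l => B l + α * dist y (p l)) + α * dist x y := by
  obtain ⟨l, hl, hmin⟩ := s.exists_mem_eq_inf' hs (fun l => B l + α * dist y (p l))
  have htri := mul_le_mul_of_nonneg_left (dist_triangle x y (p l)) hα
  calc s.inf' hs (fun l => B l + α * dist x (p l)) ≤ B l + α * dist x (p l) := s.inf'_le _ hl
    _ ≤ B l + α * dist y (p l) + α * dist x y := by linarith
    _ = _ := by rw [hmin]

namespace Fin

variable {n : ℕ} {E A F : Fin (n + 1) → ℝ}

theorem le_of_forward_min_recurrence {c : Fin n → ℝ}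
    (hE : ∀ i : Fin n, E i.succ = min (E i.castSucc + c i) (A i.succ))
    (h0 : F 0 ≤ E 0) (hFA : ∀ i, F i ≤ A i) (hF : ∀ i : Fin n, F i.succ ≤ F i.castSucc + c i) :
    ∀ i, F i ≤ E i :=
  Fin.induction h0 fun i hi => by
    rw [hE]
    exact le_min (by linarith [hF i]) (hFA _)

theorem le_of_backward_min_recurrence {c : Fin n → ℝ}
    (hE : ∀ i : Fin n, E i.castSucc = min (E i.succ + c i) (A i.castSucc))
    (hlast : F (last n) ≤ E (last n)) (hFA : ∀ i, F i ≤ A i)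
    (hF : ∀ i : Fin n, F i.castSucc ≤ F i.succ + c i) :
    ∀ i, F i ≤ E i :=
  Fin.reverseInduction hlast fun i hi => by
    rw [hE]
    exact le_min (by linarith [hF i]) (hFA _)

variable {v : Fin (n + 1) → ℝ} {α : ℝ}

theorem forward_min_recurrence_le
    (hE : ∀ i : Fin n, E i.succ = min (E i.castSucc + α * (v i.succ - v i.castSucc)) (A i.succ))
    (h0 : E 0 ≤ A 0) {l k : Fin (n + 1)} (hlk : l ≤ k) :
    E k ≤ A l + α * (v k - v l) := by
  have hanti : Antitone fun i => E i - α * v i :=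
    antitone_iff_succ_le.2 fun i => by linarith [hE i ▸ min_le_left _ _]
  have hEA : E l ≤ A l := Fin.cases h0 (fun i => hE i ▸ min_le_right _ _) l
  linarith [hanti hlk]

theorem backward_min_recurrence_le
    (hE : ∀ i : Fin n, E i.castSucc = min (E i.succ + α * (v i.succ - v i.castSucc)) (A i.castSucc))
    (hlast : E (last n) ≤ A (last n)) {k l : Fin (n + 1)} (hkl : k ≤ l) :
    E k ≤ A l + α * (v l - v k) := by
  have hmono : Monotone fun i => E i + α * v i :=
    monotone_iff_le_succ.2 fun i => by linarith [hE i ▸ min_le_left _ _]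
  have hEA : E l ≤ A l := Fin.lastCases hlast (fun i => hE i ▸ min_le_right _ _) l
  linarith [hmono hkl]

end Fin

theorem two_pass_distance_transform_correct
    (K : ℕ) (hK : 0 < K) (v : Fin K → ℝ) (hv : StrictMono v)
    (B : Fin K → ℝ) (α : ℝ) (hα : 0 < α)
    (D1 D : Fin K → ℝ)
    (hD1_0 : D1 ⟨0, hK⟩ = B ⟨0, hK⟩)
    (hD1 : ∀ (k : ℕ) (h : k + 1 < K),
      D1 ⟨k + 1, h⟩ =
        min (D1 ⟨k, by omega⟩ + α * (v ⟨k + 1, h⟩ - v ⟨k, by omega⟩)) (B ⟨k + 1, h⟩))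
    (hD_last : D ⟨K - 1, by omega⟩ = D1 ⟨K - 1, by omega⟩)
    (hD : ∀ (k : ℕ) (h : k + 1 < K),
      D ⟨k, by omega⟩ =
        min (D ⟨k + 1, h⟩ + α * (v ⟨k + 1, h⟩ - v ⟨k, by omega⟩)) (D1 ⟨k, by omega⟩)) :
    ∀ k : Fin K,
      D k = Finset.univ.inf' ⟨⟨0, hK⟩, Finset.mem_univ _⟩
        (fun l => B l + α * |v k - v l|) := by
  obtain ⟨n, rfl⟩ : ∃ n, K = n + 1 := ⟨K - 1, by omega⟩
  have hfwd (i : Fin n) : D1 i.succ =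
      min (D1 i.castSucc + α * (v i.succ - v i.castSucc)) (B i.succ) := hD1 i i.succ.isLt
  have hbwd (i : Fin n) : D i.castSucc =
      min (D i.succ + α * (v i.succ - v i.castSucc)) (D1 i.castSucc) := hD i i.succ.isLt
  set F := fun k => univ.inf' ⟨⟨0, hK⟩, mem_univ _⟩ (fun l => B l + α * |v k - v l|)
  have hF_lip (k l : Fin (n + 1)) : F k ≤ F l + α * |v k - v l| := by
    simpa only [Real.dist_eq] using inf'_add_mul_dist_le_add _ B v hα.le (v k) (v l)
  have hFB (k : Fin (n + 1)) : F k ≤ B k := by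
    simpa using inf'_le (fun l => B l + α * |v k - v l|) (mem_univ k)
  have hFD1 := Fin.le_of_forward_min_recurrence hfwd (hD1_0 ▸ hFB 0) hFB fun i =>
    (hF_lip _ _).trans_eq (by rw [abs_of_pos (sub_pos.2 (hv i.castSucc_lt_succ))])
  have hFD := Fin.le_of_backward_min_recurrence hbwd (hD_last ▸ hFD1 _) hFD1 fun i =>
    (hF_lip _ _).trans_eq (by rw [abs_sub_comm, abs_of_pos (sub_pos.2 (hv i.castSucc_lt_succ))])
  intro k
  refine le_antisymm (le_inf' _ _ fun l _ => ?_) (hFD k)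
  have hD1_le {i j : Fin (n + 1)} (hij : i ≤ j) :=
    Fin.forward_min_recurrence_le hfwd hD1_0.le hij
  have hD_le {i j : Fin (n + 1)} (hij : i ≤ j) :=
    Fin.backward_min_recurrence_le hbwd hD_last.le hij
  rcases le_total l k with hlk | hkl
  · rw [abs_of_nonneg (sub_nonneg.2 (hv.monotone hlk))]
    linarith [hD_le (le_refl k), hD1_le hlk]
  · rw [abs_sub_comm, abs_of_nonneg (sub_nonneg.2 (hv.monotone hkl))]
    linarith [hD_le hkl, hD1_le (le_refl l)]
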